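/- arXiv:2209.04667 — 2 statements merged into one kernel-verified Lean document; each statement's English description precedes it below -/
import Mathlib

section
/- Let X be a Polish space and F the Hutchinson operator of an IFS (X; f_i : i ∈ I). Fix a positive integer k and let G = F^k be the Hutchinson operator of the k-th iterate IFS (X; f_{i₁}∘…∘f_{i_k} : (i₁,…,i_k) ∈ I^k). If a nonempty closed set A* satisfies ⋂_{x∈X} Li Gⁿ({x}) = A* (i.e., A* is a semiattractor of the iterated system), then ⋂_{x∈X} Li Fⁿ({x}) = A* (i.e., A* is a semiattractor of the original system). -/
open Filter Topology Set

/-- Lower Kuratowski limit of a sequence of sets. -/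
def Li {X : Type*} [MetricSpace X] (S : ℕ → Set X) : Set X :=
  {y | ∃ u : ℕ → X, (∀ n, u n ∈ S n) ∧ Tendsto u atTop (𝓝 y)}

/-- Hutchinson operator of the IFS `(X; f_i : i ∈ I)`. -/
def hutch {X : Type*} [TopologicalSpace X] {I : Type*} (f : I → X → X) (S : Set X) : Set X :=
  closure (⋃ i, f i '' S)

/-- Composition `f_{i₁} ∘ … ∘ f_{i_k}` along a list of indices. -/
def seqComp {X I : Type*} (f : I → X → X) : List I → (X → X)
  | [] => id
  | i :: t => f i ∘ seqComp f t

/-!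
Since the maps are continuous, the Hutchinson operator of the `k`-th iterate IFS is `Fᵏ`, so the
semiattractor hypothesis concerns the subsequences `n ↦ Fᵏⁿ({x})`. A lower limit of a sequence
lies in the lower limit of every subsequence, which gives one inclusion. Conversely, if `y` lies in
`Li Fᵏⁿ({z})` for every `z`, choose `zᵣ ∈ Fʳ({x})` for `r < k`: since
`Fᵏⁿ({zᵣ}) ⊆ Fᵏⁿ⁺ʳ({x})`, `y` is a limit along each residue class mod `k`, and interleaving
these `k` sequences gives `y ∈ Li Fⁿ({x})`.
-/

section LowerLimit

variable {X : Type*} [MetricSpace X]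

lemma Li_mono {S T : ℕ → Set X} (h : ∀ n, S n ⊆ T n) : Li S ⊆ Li T :=
  fun _ ⟨u, hu, hlim⟩ => ⟨u, fun n => h n (hu n), hlim⟩

lemma Li_subset_Li_comp (S : ℕ → Set X) {φ : ℕ → ℕ} (hφ : Tendsto φ atTop atTop) :
    Li S ⊆ Li (S ∘ φ) :=
  fun _ ⟨u, hu, hlim⟩ => ⟨u ∘ φ, fun n => hu (φ n), hlim.comp hφ⟩

lemma mem_Li_of_forall_mem_Li_mul_add {S : ℕ → Set X} {k : ℕ} (hk : 0 < k) {y : X}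
    (h : ∀ r : Fin k, y ∈ Li (fun n => S (k * n + r))) : y ∈ Li S := by
  choose u hu hlim using h
  refine ⟨fun n => u ⟨n % k, Nat.mod_lt n hk⟩ (n / k), fun n => ?_, fun s hs => ?_⟩
  · simpa only [Nat.div_add_mod] using hu ⟨n % k, Nat.mod_lt n hk⟩ (n / k)
  · have hall : ∀ᶠ m in atTop, ∀ r, u r m ∈ s := eventually_all.2 fun r => hlim r hs
    exact ((Nat.tendsto_div_const_atTop hk.ne').eventually hall).mono fun n hn => hn _

end LowerLimit

lemma seqComp_ofFn_succ {X I : Type*} (f : I → X → X) {k : ℕ} (v : Fin (k + 1) → I) :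
    seqComp f (List.ofFn v) = f (v 0) ∘ seqComp f (List.ofFn (Fin.tail v)) := by
  rw [List.ofFn_succ]
  rfl

section Hutchinson

variable {X : Type*} [TopologicalSpace X] {I J : Type*}

lemma hutch_mono (f : I → X → X) : Monotone (hutch f) := fun _ _ h =>
  closure_mono (iUnion_mono fun _ => image_mono h)

lemma hutch_iterate_nonempty [Nonempty I] (f : I → X → X) {S : Set X} (hS : S.Nonempty) (n : ℕ) :
    ((hutch f)^[n] S).Nonempty := by
  induction n with
  | zero => exact hS
  | succ n ih =>
    rw [Function.iterate_succ_apply']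
    exact (ih.image _).mono (subset_iUnion (fun i => f i '' _) (Classical.arbitrary I)) |>.closure

lemma hutch_comp_of_surjective (f : I → X → X) {e : J → I} (he : e.Surjective) :
    hutch (f ∘ e) = hutch f :=
  funext fun S => congrArg closure (he.iUnion_comp fun i => f i '' S)

lemma hutch_closure {f : I → X → X} (hf : ∀ i, Continuous (f i)) (S : Set X) :
    hutch f (closure S) = hutch f S := by
  refine subset_antisymm (closure_minimal (iUnion_subset fun i => ?_) isClosed_closure)
    (hutch_mono f subset_closure)
  exact (image_closure_subset_closure_image (hf i)).trans
    (closure_mono (subset_iUnion (fun i => f i '' S) i))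

lemma hutch_hutch {g : I → X → X} (hg : ∀ i, Continuous (g i)) (f : J → X → X) (S : Set X) :
    hutch g (hutch f S) = hutch (fun p : I × J => g p.1 ∘ f p.2) S := by
  calc hutch g (hutch f S) = hutch g (⋃ j, f j '' S) := hutch_closure hg _
    _ = _ := by simp only [hutch, iUnion_prod', image_iUnion, image_comp]

lemma hutch_seqComp_ofFn_eq_iterate {f : I → X → X} (hf : ∀ i, Continuous (f i)) {k : ℕ}
    (hk : 0 < k) :
    hutch (fun v : Fin k → I => seqComp f (List.ofFn v)) = (hutch f)^[k] := by
  induction k, hk using Nat.le_induction with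
  | base =>
    have hfam : (fun v : Fin 1 → I => seqComp f (List.ofFn v)) = f ∘ fun v => v 0 := by
      funext v
      rw [seqComp_ofFn_succ]
      rfl
    rw [hfam, hutch_comp_of_surjective f fun i => ⟨fun _ => i, rfl⟩]
    rfl
  | succ k _ ih =>
    have hfam : (fun v : Fin (k + 1) → I => seqComp f (List.ofFn v)) =
        (fun p : I × (Fin k → I) => f p.1 ∘ seqComp f (List.ofFn p.2)) ∘
          fun v => (v 0, Fin.tail v) :=
      funext (seqComp_ofFn_succ f)
    have hsurj : (fun v : Fin (k + 1) → I => (v 0, Fin.tail v)).Surjective :=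
      fun p => ⟨Fin.cons p.1 p.2, by simp⟩
    funext S
    rw [hfam, hutch_comp_of_surjective _ hsurj, Function.iterate_succ_apply', ← ih,
      hutch_hutch hf]

end Hutchinson

theorem semiattractor_of_iterate_general
    {X : Type*} [MetricSpace X]
    {I : Type*} [Nonempty I]
    (f : I → X → X) (hf : ∀ i, Continuous (f i))
    (k : ℕ) (hk : 0 < k)
    (A : Set X)
    (hG : ⋂ x : X,
        Li (fun n => (hutch (fun v : Fin k → I => seqComp f (List.ofFn v)))^[n] {x}) = A) :
    ⋂ x : X, Li (fun n => (hutch f)^[n] {x}) = A := by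
  simp only [hutch_seqComp_ofFn_eq_iterate hf hk, ← Function.iterate_mul] at hG
  refine subset_antisymm ?_ fun y hy => mem_iInter.2 fun x => ?_
  · rw [← hG]
    exact iInter_mono fun _ => Li_subset_Li_comp _ (strictMono_mul_left_of_pos hk).tendsto_atTop
  · refine mem_Li_of_forall_mem_Li_mul_add hk fun r => ?_
    obtain ⟨z, hz⟩ := hutch_iterate_nonempty f (singleton_nonempty x) r
    refine Li_mono (fun n => ?_) (mem_iInter.1 (hG ▸ hy) z)
    rw [Function.iterate_add_apply]
    exact (hutch_mono f).iterate _ (singleton_subset_iff.2 hz)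

/-- If `A*` is a semiattractor of the `k`-th iterate IFS, then it is a semiattractor of the
original IFS. -/
theorem semiattractor_of_iterate
    {X : Type*} [MetricSpace X] [CompleteSpace X] [TopologicalSpace.SeparableSpace X]
    {I : Type*} [Fintype I] [Nonempty I]
    (f : I → X → X) (hf : ∀ i, Continuous (f i))
    (k : ℕ) (hk : 0 < k)
    (A : Set X) (hne : A.Nonempty) (hcl : IsClosed A)
    (hG : ⋂ x : X,
        Li (fun n => (hutch (fun v : Fin k → I => seqComp f (List.ofFn v)))^[n] {x}) = A) :
    ⋂ x : X, Li (fun n => (hutch f)^[n] {x}) = A :=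
  semiattractor_of_iterate_general f hf k hk A hG
end

section
/- Let X be a Polish space and (X; (f_i, p_i) : i ∈ I) a probabilistic IFS consisting of Lipschitz maps f_i with probabilities p_i > 0, Σ_{i∈I} p_i = 1, and let M be the associated Markov operator, Mμ = Σ_{i∈I} p_i · μ∘f_i⁻¹. Suppose that for some k ≥ 1, Σ_{(i₁,…,i_k)∈I^k} p_{i₁}···p_{i_k} · Lip(f_{i₁}∘…∘f_{i_k}) < 1. Then the unique invariant probability measure μ* of M (Mμ* = μ*) satisfies supp μ* = ⋂_{x∈X} Li Fⁿ({x}), i.e., the support of the invariant measure is the semiattractor of the IFS. -/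
open Filter Topology Set NNReal ENNReal MeasureTheory

/-- The (smallest) Lipschitz constant of a map. -/
noncomputable def lipConst {X Y : Type*} [PseudoMetricSpace X] [PseudoMetricSpace Y]
    (g : X → Y) : ℝ :=
  sInf {K : ℝ | 0 ≤ K ∧ ∀ x y, dist (g x) (g y) ≤ K * dist x y}

/-- The Markov operator `Mμ = Σ_i p_i · μ∘f_i⁻¹` of a probabilistic IFS. -/
noncomputable def markov {X : Type*} [MeasurableSpace X] {I : Type*} [Fintype I]
    (f : I → X → X) (p : I → ℝ≥0) (μ : Measure X) : Measure X :=
  ∑ i, (p i : ℝ≥0∞) • μ.map (f i)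

/-- The topological support of a measure. -/
def msupport {X : Type*} [TopologicalSpace X] [MeasurableSpace X] (μ : Measure X) : Set X :=
  {x | ∀ U : Set X, IsOpen U → x ∈ U → 0 < μ U}

section lip

variable {X Y Z : Type*} [PseudoMetricSpace X] [PseudoMetricSpace Y] [PseudoMetricSpace Z]

lemma lipSet_nonempty {g : X → Y} (h : ∃ K : ℝ≥0, LipschitzWith K g) :
    {K : ℝ | 0 ≤ K ∧ ∀ x y, dist (g x) (g y) ≤ K * dist x y}.Nonempty := by
  obtain ⟨K, hK⟩ := h
  exact ⟨K, K.coe_nonneg, fun x y => hK.dist_le_mul x y⟩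

lemma lipSet_bdd (g : X → Y) :
    BddBelow {K : ℝ | 0 ≤ K ∧ ∀ x y, dist (g x) (g y) ≤ K * dist x y} :=
  ⟨0, fun K hK => hK.1⟩

lemma lipConst_nonneg {g : X → Y} (h : ∃ K : ℝ≥0, LipschitzWith K g) : 0 ≤ lipConst g :=
  le_csInf (lipSet_nonempty h) fun _ hK => hK.1

lemma lipConst_le {g : X → Y} {K : ℝ} (h0 : 0 ≤ K)
    (h : ∀ x y, dist (g x) (g y) ≤ K * dist x y) : lipConst g ≤ K :=
  csInf_le (lipSet_bdd g) ⟨h0, h⟩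

lemma dist_le_lipConst {g : X → Y} (h : ∃ K : ℝ≥0, LipschitzWith K g) (x y : X) :
    dist (g x) (g y) ≤ lipConst g * dist x y := by
  rcases eq_or_lt_of_le (dist_nonneg (x := x) (y := y)) with hd | hd
  · obtain ⟨K, hK⟩ := lipSet_nonempty h
    calc dist (g x) (g y) ≤ K * dist x y := hK.2 x y
      _ = 0 := by rw [← hd]; ring
      _ ≤ lipConst g * dist x y := by rw [← hd, mul_zero]
  · rw [← div_le_iff₀ hd]
    refine le_csInf (lipSet_nonempty h) fun K hK => ?_
    rw [div_le_iff₀ hd]; exact hK.2 x y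

lemma lipConst_comp_le {g : Y → Z} {h : X → Y} (hg : ∃ K : ℝ≥0, LipschitzWith K g)
    (hh : ∃ K : ℝ≥0, LipschitzWith K h) :
    lipConst (g ∘ h) ≤ lipConst g * lipConst h := by
  refine lipConst_le (mul_nonneg (lipConst_nonneg hg) (lipConst_nonneg hh)) fun x y => ?_
  calc dist (g (h x)) (g (h y)) ≤ lipConst g * dist (h x) (h y) := dist_le_lipConst hg _ _
    _ ≤ lipConst g * (lipConst h * dist x y) :=
      mul_le_mul_of_nonneg_left (dist_le_lipConst hh x y) (lipConst_nonneg hg)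
    _ = lipConst g * lipConst h * dist x y := by ring

end lip

section seq
variable {X : Type*} [PseudoMetricSpace X] {I : Type*} {f : I → X → X}

lemma seqComp_lipschitz (hLip : ∀ i, ∃ K : ℝ≥0, LipschitzWith K (f i)) (l : List I) : ∃ K : ℝ≥0, LipschitzWith K (seqComp f l) := by
  induction l with
  | nil => exact ⟨1, LipschitzWith.id⟩
  | cons i t ih =>
    obtain ⟨K, hK⟩ := hLip i
    obtain ⟨K', hK'⟩ := ih
    exact ⟨K * K', hK.comp hK'⟩

omit [PseudoMetricSpace X] in
lemma seqComp_append (l₁ l₂ : List I) :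
    seqComp f (l₁ ++ l₂) = seqComp f l₁ ∘ seqComp f l₂ := by
  induction l₁ with
  | nil => rfl
  | cons i t ih => simp [seqComp, ih, Function.comp_assoc]

end seq

section avg
variable {X : Type*} [PseudoMetricSpace X] {I : Type*} [Fintype I] [Nonempty I]
  {f : I → X → X} {p : I → ℝ≥0}

/-- average Lipschitz sum at length n -/
noncomputable def avgS (f : I → X → X) (p : I → ℝ≥0) (n : ℕ) : ℝ :=
  ∑ v : Fin n → I, (∏ l, (p (v l) : ℝ)) * lipConst (seqComp f (List.ofFn v))

lemma avgS_nonneg (hLip : ∀ i, ∃ K : ℝ≥0, LipschitzWith K (f i)) (n : ℕ) :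
    0 ≤ avgS f p n :=
  Finset.sum_nonneg fun v _ => mul_nonneg (Finset.prod_nonneg fun _ _ => (p _).coe_nonneg)
    (lipConst_nonneg (seqComp_lipschitz hLip _))

lemma avgS_submul (hLip : ∀ i, ∃ K : ℝ≥0, LipschitzWith K (f i)) (m n : ℕ) :
    avgS f p (m + n) ≤ avgS f p m * avgS f p n := by
  rw [avgS, ← Equiv.sum_comp (Fin.appendEquiv (α := I) m n)]
  rw [Fintype.sum_prod_type]
  rw [avgS, avgS, Finset.sum_mul_sum]
  refine Finset.sum_le_sum fun a _ => Finset.sum_le_sum fun b _ => ?_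
  have h1 : ∏ l, (p (Fin.appendEquiv m n (a, b) l) : ℝ)
      = (∏ l, (p (a l) : ℝ)) * ∏ l, (p (b l) : ℝ) := by
    simp only [Fin.appendEquiv_apply]
    rw [Fin.prod_univ_add]
    simp [Fin.append_left, Fin.append_right]
  have h2 : List.ofFn (Fin.appendEquiv m n (a, b)) = List.ofFn a ++ List.ofFn b :=
    List.ofFn_fin_append a b
  rw [h1, h2, seqComp_append]
  have hle := lipConst_comp_le (seqComp_lipschitz hLip (List.ofFn a))
      (seqComp_lipschitz hLip (List.ofFn b))
  have hp1 : (0:ℝ) ≤ ∏ l, (p (a l) : ℝ) := Finset.prod_nonneg fun _ _ => (p _).coe_nonneg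
  have hp2 : (0:ℝ) ≤ ∏ l, (p (b l) : ℝ) := Finset.prod_nonneg fun _ _ => (p _).coe_nonneg
  calc (∏ l, (p (a l) : ℝ)) * (∏ l, (p (b l) : ℝ))
        * lipConst (seqComp f (List.ofFn a) ∘ seqComp f (List.ofFn b))
      ≤ (∏ l, (p (a l) : ℝ)) * (∏ l, (p (b l) : ℝ))
        * (lipConst (seqComp f (List.ofFn a)) * lipConst (seqComp f (List.ofFn b))) :=
        mul_le_mul_of_nonneg_left hle (mul_nonneg hp1 hp2)
    _ = (∏ l, (p (a l) : ℝ)) * lipConst (seqComp f (List.ofFn a))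
        * ((∏ l, (p (b l) : ℝ)) * lipConst (seqComp f (List.ofFn b))) := by ring

lemma avgS_mul_add (hLip : ∀ i, ∃ K : ℝ≥0, LipschitzWith K (f i)) (k q r : ℕ) :
    avgS f p (k * q + r) ≤ (avgS f p k) ^ q * avgS f p r := by
  induction q with
  | zero => simpa using le_refl _
  | succ q ih =>
    have : k * (q + 1) + r = k + (k * q + r) := by ring
    rw [this]
    calc avgS f p (k + (k * q + r)) ≤ avgS f p k * avgS f p (k * q + r) :=
        avgS_submul hLip k (k * q + r)
      _ ≤ avgS f p k * ((avgS f p k) ^ q * avgS f p r) :=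
        mul_le_mul_of_nonneg_left ih (avgS_nonneg hLip k)
      _ = (avgS f p k) ^ (q + 1) * avgS f p r := by ring

lemma avgS_tendsto (hLip : ∀ i, ∃ K : ℝ≥0, LipschitzWith K (f i))
    {k : ℕ} (hk : 1 ≤ k) (hc : avgS f p k < 1) :
    Tendsto (avgS f p) atTop (𝓝 0) := by
  set c := avgS f p k with hcdef
  have hc0 : 0 ≤ c := avgS_nonneg hLip k
  set C : ℝ := ∑ r ∈ Finset.range k, avgS f p r with hCdef
  have hbound : ∀ n, avgS f p n ≤ C * c ^ (n / k) := by
    intro n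
    have hn : k * (n / k) + n % k = n := by rw [Nat.div_add_mod]
    have h1 : avgS f p n ≤ c ^ (n / k) * avgS f p (n % k) := by
      conv_lhs => rw [← hn]
      exact avgS_mul_add hLip k (n / k) (n % k)
    have h2 : avgS f p (n % k) ≤ C :=
      Finset.single_le_sum (f := fun r => avgS f p r)
        (fun r _ => avgS_nonneg hLip r) (Finset.mem_range.2 (Nat.mod_lt n hk))
    calc avgS f p n ≤ c ^ (n / k) * avgS f p (n % k) := h1
      _ ≤ c ^ (n / k) * C := mul_le_mul_of_nonneg_left h2 (pow_nonneg hc0 _)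
      _ = C * c ^ (n / k) := by ring
  have hdiv : Tendsto (fun n : ℕ => n / k) atTop atTop := by
    apply tendsto_atTop_atTop.2
    intro b
    exact ⟨k * b, fun n hn => Nat.le_div_iff_mul_le (by omega) |>.2 (by
      calc b * k = k * b := by ring
        _ ≤ n := hn)⟩
  have hpow : Tendsto (fun n : ℕ => C * c ^ (n / k)) atTop (𝓝 0) := by
    have := (tendsto_pow_atTop_nhds_zero_of_lt_one hc0 hc).comp hdiv
    have := this.const_mul C
    simpa using this
  exact squeeze_zero (fun n => avgS_nonneg hLip n) hbound hpow

end avg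

section supp
variable {X : Type*} [MetricSpace X] [TopologicalSpace.SeparableSpace X]
  [MeasurableSpace X] [BorelSpace X]
  {I : Type*} [Fintype I] [Nonempty I] {f : I → X → X} {p : I → ℝ≥0} {μ : Measure X}

lemma msupport_eq : msupport μ = (⋃₀ {V : Set X | IsOpen V ∧ μ V = 0})ᶜ := by
  ext x
  simp only [msupport, mem_setOf_eq, mem_compl_iff, mem_sUnion, not_exists]
  constructor
  · rintro h V ⟨⟨hVo, hV0⟩, hxV⟩
    exact absurd hV0 (h V hVo hxV).ne'
  · intro h U hU hxU
    rw [pos_iff_ne_zero]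
    intro h0
    exact h U ⟨⟨hU, h0⟩, hxU⟩

lemma msupport_closed : IsClosed (msupport μ) := by
  rw [msupport_eq]
  exact (isOpen_sUnion fun V hV => hV.1).isClosed_compl

lemma msupport_compl_null : μ (msupport μ)ᶜ = 0 := by
  haveI : SecondCountableTopology X := UniformSpace.secondCountable_of_separable X
  rw [msupport_eq, compl_compl]
  obtain ⟨T, hTc, hTsub, hTU⟩ :=
    TopologicalSpace.isOpen_sUnion_countable {V : Set X | IsOpen V ∧ μ V = 0}
      fun V hV => hV.1
  rw [← hTU]
  exact (measure_sUnion_null_iff hTc).2 fun s hs => (hTsub hs).2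

lemma msupport_nonempty [IsProbabilityMeasure μ] : (msupport μ).Nonempty := by
  rw [nonempty_iff_ne_empty]
  intro h
  have : μ (msupport μ)ᶜ = 1 := by rw [h, compl_empty, measure_univ]
  rw [msupport_compl_null] at this
  exact zero_ne_one this

lemma markov_apply (hm : ∀ i, Measurable (f i)) {s : Set X} (hs : MeasurableSet s) :
    markov f p μ s = ∑ i, (p i : ℝ≥0∞) * μ (f i ⁻¹' s) := by
  rw [markov, Measure.finset_sum_apply]
  exact Finset.sum_congr rfl fun i _ => by
    rw [Measure.smul_apply, Measure.map_apply (hm i) hs, smul_eq_mul]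

lemma image_msupport_subset (hm : ∀ i, Continuous (f i)) (hp : ∀ i, 0 < p i)
    (hinv : markov f p μ = μ) (i : I) : f i '' msupport μ ⊆ msupport μ := by
  rintro _ ⟨x, hx, rfl⟩ U hU hfx
  have hpre : 0 < μ (f i ⁻¹' U) := hx _ (hU.preimage (hm i)) hfx
  have : μ U = ∑ j, (p j : ℝ≥0∞) * μ (f j ⁻¹' U) := by
    rw [← hinv, markov_apply (fun j => (hm j).measurable) hU.measurableSet, hinv]
  rw [this]
  calc (0 : ℝ≥0∞) < (p i : ℝ≥0∞) * μ (f i ⁻¹' U) := by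
        refine ENNReal.mul_pos ?_ hpre.ne'
        exact_mod_cast (hp i).ne'
    _ ≤ ∑ j, (p j : ℝ≥0∞) * μ (f j ⁻¹' U) :=
        Finset.single_le_sum (f := fun j => (p j : ℝ≥0∞) * μ (f j ⁻¹' U))
          (fun j _ => zero_le) (Finset.mem_univ i)

lemma hutch_subset_of_subset (hm : ∀ i, Continuous (f i)) (hp : ∀ i, 0 < p i)
    (hinv : markov f p μ = μ) {S : Set X} (hS : S ⊆ msupport μ) :
    hutch f S ⊆ msupport μ := by
  rw [hutch, ← (msupport_closed (μ := μ)).closure_eq]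
  refine closure_mono (iUnion_subset fun i => ?_)
  exact (image_mono (f := f i) hS).trans (image_msupport_subset hm hp hinv i)

lemma hutch_iter_subset (hm : ∀ i, Continuous (f i)) (hp : ∀ i, 0 < p i)
    (hinv : markov f p μ = μ) {x : X} (hx : x ∈ msupport μ) (n : ℕ) :
    (hutch f)^[n] {x} ⊆ msupport μ := by
  induction n with
  | zero => simpa using hx
  | succ n ih =>
    rw [Function.iterate_succ_apply']
    exact hutch_subset_of_subset hm hp hinv ih

omit [TopologicalSpace.SeparableSpace X] [MeasurableSpace X] [BorelSpace X] [Fintype I] [Nonempty I] in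
lemma seqComp_mem_hutch_iter (n : ℕ) (v : Fin n → I) (z : X) :
    seqComp f (List.ofFn v) z ∈ (hutch f)^[n] {z} := by
  induction n with
  | zero => simp [seqComp]
  | succ n ih =>
    rw [Function.iterate_succ_apply', List.ofFn_succ]
    have : seqComp f (v 0 :: List.ofFn fun i => v i.succ) z
        = f (v 0) (seqComp f (List.ofFn fun i => v i.succ) z) := rfl
    rw [this]
    refine subset_closure ?_
    exact mem_iUnion.2 ⟨v 0, mem_image_of_mem _ (ih _)⟩

omit [TopologicalSpace.SeparableSpace X] [MeasurableSpace X] [BorelSpace X] [Fintype I] in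
lemma hutch_iter_nonempty (z : X) (n : ℕ) : ((hutch f)^[n] {z}).Nonempty := by
  induction n with
  | zero => simp
  | succ n ih =>
    rw [Function.iterate_succ_apply']
    obtain ⟨y, hy⟩ := ih
    obtain ⟨i⟩ := ‹Nonempty I›
    exact ⟨f i y, subset_closure (mem_iUnion.2 ⟨i, mem_image_of_mem _ hy⟩)⟩

lemma measure_map_finset_sum {α β : Type*} [MeasurableSpace α] [MeasurableSpace β]
    {g : α → β} (hg : Measurable g) {ι : Type*} (s : Finset ι) (m : ι → Measure α) :
    (∑ i ∈ s, m i).map g = ∑ i ∈ s, (m i).map g := by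
  classical
  induction s using Finset.induction_on with
  | empty => simp
  | insert _ _ hns ih =>
    rw [Finset.sum_insert hns, Measure.map_add _ _ hg, ih, Finset.sum_insert hns]

lemma markov_iter (hm : ∀ i, Measurable (f i)) (hinv : markov f p μ = μ) (n : ℕ) :
    μ = ∑ v : Fin n → I, ((∏ l, p (v l) : ℝ≥0) : ℝ≥0∞) • μ.map (seqComp f (List.ofFn v)) := by
  have hmseq : ∀ l : List I, Measurable (seqComp f l) := by
    intro l
    induction l with
    | nil => exact measurable_id
    | cons i t ih => exact (hm i).comp ih
  induction n with
  | zero => simp [seqComp, Measure.map_id]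
  | succ n ih =>
    have step : markov f p μ = μ := hinv
    conv_lhs => rw [← step, markov]
    conv_lhs => rw [ih]
    rw [← (Fin.consEquiv (fun _ : Fin (n+1) => I)).sum_comp]
    rw [Fintype.sum_prod_type]
    refine Finset.sum_congr rfl fun i _ => ?_
    rw [measure_map_finset_sum (hm i), Finset.smul_sum]
    refine Finset.sum_congr rfl fun v _ => ?_
    have h1 : (Fin.consEquiv (fun _ : Fin (n+1) => I)) (i, v) = Fin.cons i v := rfl
    rw [h1]
    have h2 : List.ofFn (Fin.cons i v : Fin (n+1) → I) = i :: List.ofFn v := by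
      rw [List.ofFn_succ]
      simp [Fin.cons]
    have h3 : ∏ l : Fin (n+1), p ((Fin.cons i v : Fin (n+1) → I) l) = p i * ∏ l, p (v l) := by
      simp [Fin.prod_univ_succ]
    rw [h2, h3]
    have h4 : seqComp f (i :: List.ofFn v) = f i ∘ seqComp f (List.ofFn v) := rfl
    rw [h4, ← Measure.map_map (hm i) (hmseq _)]
    rw [Measure.map_smul]
    rw [smul_smul, ENNReal.coe_mul]

end supp

section main
variable {X : Type*} [MetricSpace X] [CompleteSpace X] [TopologicalSpace.SeparableSpace X]
  [MeasurableSpace X] [BorelSpace X]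
  {I : Type*} [Fintype I] [Nonempty I]

lemma key_approx (f : I → X → X) (hLip : ∀ i, ∃ K : ℝ≥0, LipschitzWith K (f i))
    (p : I → ℝ≥0) (hp : ∀ i, 0 < p i) (hsum : ∑ i, p i = 1)
    (k : ℕ) (hk : 1 ≤ k) (havg : avgS f p k < 1)
    (μstar : Measure X) (hprob : IsProbabilityMeasure μstar)
    (hinv : markov f p μstar = μstar)
    {x : X} (hx : x ∈ msupport μstar) (z : X) {ε : ℝ} (hε : 0 < ε) :
    ∃ N, ∀ n ≥ N, ∃ y ∈ (hutch f)^[n] {z}, dist y x < ε := by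
  have hm : ∀ i, Continuous (f i) := fun i => (hLip i).choose_spec.continuous
  have hmseq : ∀ l : List I, Measurable (seqComp f l) := by
    intro l
    induction l with
    | nil => exact measurable_id
    | cons i t ih => exact ((hm i).measurable).comp ih
  set Bx := Metric.ball x (ε / 2) with hBx
  set α := μstar Bx with hα
  have hαpos : 0 < α := hx Bx Metric.isOpen_ball (Metric.mem_ball_self (by linarith))
  have hαfin : α ≠ ∞ := measure_ne_top μstar Bx
  have hhalfpos : 0 < α / 2 := ENNReal.half_pos hαpos.ne'
  have hhalffin : α / 2 ≠ ∞ := (ENNReal.half_le_self.trans_lt hαfin.lt_top).ne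
  -- choose R
  have hiInter : ⋂ m : ℕ, (Metric.closedBall z m)ᶜ = (∅ : Set X) := by
    ext y
    simp only [mem_iInter, mem_compl_iff, Metric.mem_closedBall, not_le, mem_empty_iff_false,
      iff_false, not_forall, not_lt]
    obtain ⟨m, hm'⟩ := exists_nat_ge (dist y z)
    exact ⟨m, hm'⟩
  have htend : Tendsto (fun m : ℕ => μstar (Metric.closedBall z m)ᶜ) atTop (𝓝 0) := by
    have := tendsto_measure_iInter_atTop (μ := μstar)
      (s := fun m : ℕ => (Metric.closedBall z m)ᶜ)
      (fun m => (Metric.isClosed_closedBall.measurableSet.compl).nullMeasurableSet)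
      (fun a b hab => compl_subset_compl.2 (Metric.closedBall_subset_closedBall (by exact_mod_cast hab)))
      ⟨0, measure_ne_top _ _⟩
    rwa [hiInter, measure_empty] at this
  obtain ⟨N₀, hN₀⟩ := (htend.eventually_lt_const hhalfpos).exists_forall_of_atTop
  set R : ℝ := max N₀ 1 with hR
  have hR1 : (1:ℝ) ≤ R := le_max_right _ _
  have hRpos : 0 < R := lt_of_lt_of_le one_pos hR1
  set C := Metric.closedBall z R with hC
  have hCc : μstar Cᶜ < α / 2 := by
    refine lt_of_le_of_lt ?_ (hN₀ N₀ le_rfl)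
    refine measure_mono (compl_subset_compl.2 (Metric.closedBall_subset_closedBall ?_))
    exact le_max_left _ _
  set t : ℝ := ε / (2 * R) with ht
  have htpos : 0 < t := div_pos hε (by linarith)
  have htR : t * R = ε / 2 := by rw [ht]; field_simp
  set α2r := (α / 2).toReal with hα2r
  have hα2rpos : 0 < α2r := ENNReal.toReal_pos hhalfpos.ne' hhalffin
  obtain ⟨N, hN⟩ := ((avgS_tendsto hLip hk havg).eventually_lt_const
    (mul_pos htpos hα2rpos)).exists_forall_of_atTop
  refine ⟨N, fun n hn => ?_⟩
  by_contra hcon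
  push_neg at hcon
  -- every "good" word has null intersection measure
  have hgood : ∀ v : Fin n → I, lipConst (seqComp f (List.ofFn v)) ≤ t →
      μstar (seqComp f (List.ofFn v) ⁻¹' Bx ∩ C) = 0 := by
    intro v hvlip
    by_contra h0
    obtain ⟨y, hyA, hyC⟩ := nonempty_of_measure_ne_zero h0
    have hyB : dist (seqComp f (List.ofFn v) y) x < ε / 2 := by
      simpa [hBx, Metric.mem_ball] using hyA
    have hzy : dist z y ≤ R := by
      rw [dist_comm]; simpa [hC, Metric.mem_closedBall] using hyC
    have hdd : dist (seqComp f (List.ofFn v) z) (seqComp f (List.ofFn v) y) ≤ t * R := by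
      calc dist (seqComp f (List.ofFn v) z) (seqComp f (List.ofFn v) y)
          ≤ lipConst (seqComp f (List.ofFn v)) * dist z y :=
            dist_le_lipConst (seqComp_lipschitz hLip _) z y
        _ ≤ t * R := mul_le_mul hvlip hzy dist_nonneg (le_of_lt htpos)
    have : dist (seqComp f (List.ofFn v) z) x < ε := by
      calc dist (seqComp f (List.ofFn v) z) x
          ≤ dist (seqComp f (List.ofFn v) z) (seqComp f (List.ofFn v) y)
            + dist (seqComp f (List.ofFn v) y) x := dist_triangle _ _ _
        _ < t * R + ε / 2 := by linarith [hdd, hyB]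
        _ = ε := by rw [htR]; ring
    exact absurd this (not_lt.2 (hcon _ (seqComp_mem_hutch_iter n v z)))
  -- expansion of α
  classical
  have hexp : α = ∑ v : Fin n → I,
      ((∏ l, p (v l) : ℝ≥0) : ℝ≥0∞) * μstar (seqComp f (List.ofFn v) ⁻¹' Bx) := by
    conv_lhs => rw [hα, markov_iter (fun i => (hm i).measurable) hinv n]
    rw [Measure.finset_sum_apply]
    exact Finset.sum_congr rfl fun v _ => by
      rw [Measure.smul_apply, Measure.map_apply (hmseq _) Metric.isOpen_ball.measurableSet,
        smul_eq_mul]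
  set Bad : Finset (Fin n → I) :=
    Finset.univ.filter (fun v => t < lipConst (seqComp f (List.ofFn v))) with hBad
  have hsum1 : ∑ v : Fin n → I, ((∏ l, p (v l) : ℝ≥0) : ℝ≥0∞) = 1 := by
    have : ∑ v : Fin n → I, ∏ l, ((p (v l) : ℝ≥0∞)) = (∑ i, (p i : ℝ≥0∞)) ^ n :=
      (Fintype.sum_pow (fun i => (p i : ℝ≥0∞)) n).symm
    rw [← ENNReal.coe_one, ← hsum]
    push_cast [this]
    rw [← ENNReal.coe_finset_sum, hsum]
    simp
  -- the chain of inequalities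
  have step1 : α ≤ (∑ v : Fin n → I,
      ((∏ l, p (v l) : ℝ≥0) : ℝ≥0∞) * μstar (seqComp f (List.ofFn v) ⁻¹' Bx ∩ C)) + α / 2 := by
    calc α = ∑ v : Fin n → I, ((∏ l, p (v l) : ℝ≥0) : ℝ≥0∞)
            * μstar (seqComp f (List.ofFn v) ⁻¹' Bx) := hexp
      _
        ≤ ∑ v : Fin n → I, ((∏ l, p (v l) : ℝ≥0) : ℝ≥0∞) *
            (μstar (seqComp f (List.ofFn v) ⁻¹' Bx ∩ C) + μstar Cᶜ) := by
          refine Finset.sum_le_sum fun v _ => mul_le_mul_right ?_ _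
          refine (measure_mono ?_).trans (measure_union_le _ _)
          intro w hw
          by_cases hwC : w ∈ C
          · exact Or.inl ⟨hw, hwC⟩
          · exact Or.inr hwC
      _ = (∑ v : Fin n → I, ((∏ l, p (v l) : ℝ≥0) : ℝ≥0∞) *
            μstar (seqComp f (List.ofFn v) ⁻¹' Bx ∩ C))
          + (∑ v : Fin n → I, ((∏ l, p (v l) : ℝ≥0) : ℝ≥0∞)) * μstar Cᶜ := by
          rw [Finset.sum_mul, ← Finset.sum_add_distrib]
          exact Finset.sum_congr rfl fun v _ => by ring
      _ ≤ _ := by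
          rw [hsum1, one_mul]
          exact add_le_add_right (le_of_lt hCc) _
  have step2 : (∑ v : Fin n → I,
      ((∏ l, p (v l) : ℝ≥0) : ℝ≥0∞) * μstar (seqComp f (List.ofFn v) ⁻¹' Bx ∩ C))
      ≤ ∑ v ∈ Bad, ((∏ l, p (v l) : ℝ≥0) : ℝ≥0∞) := by
    rw [← Finset.sum_filter_add_sum_filter_not (Finset.univ : Finset (Fin n → I))
      (fun v => t < lipConst (seqComp f (List.ofFn v)))
      (fun v => ((∏ l, p (v l) : ℝ≥0) : ℝ≥0∞) * μstar (seqComp f (List.ofFn v) ⁻¹' Bx ∩ C))]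
    have hzero : ∑ v ∈ (Finset.univ : Finset (Fin n → I)).filter
        (fun v => ¬ t < lipConst (seqComp f (List.ofFn v))),
        ((∏ l, p (v l) : ℝ≥0) : ℝ≥0∞) * μstar (seqComp f (List.ofFn v) ⁻¹' Bx ∩ C) = 0 := by
      refine Finset.sum_eq_zero fun v hv => ?_
      rw [hgood v (not_lt.1 (Finset.mem_filter.1 hv).2), mul_zero]
    rw [hzero, add_zero]
    refine Finset.sum_le_sum fun v _ => ?_
    calc ((∏ l, p (v l) : ℝ≥0) : ℝ≥0∞) * μstar (seqComp f (List.ofFn v) ⁻¹' Bx ∩ C)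
        ≤ ((∏ l, p (v l) : ℝ≥0) : ℝ≥0∞) * 1 := mul_le_mul_right prob_le_one _
      _ = _ := mul_one _
  have step3 : (∑ v ∈ Bad, ((∏ l, p (v l) : ℝ≥0) : ℝ≥0∞)) < α / 2 := by
    set b : ℝ≥0 := ∑ v ∈ Bad, ∏ l, p (v l) with hb
    have hcoe : ∑ v ∈ Bad, ((∏ l, p (v l) : ℝ≥0) : ℝ≥0∞) = (b : ℝ≥0∞) := by
      rw [hb]; push_cast; rfl
    have hreal : t * (b : ℝ) ≤ avgS f p n := by
      have h1 : t * (b : ℝ) = ∑ v ∈ Bad, (∏ l, (p (v l) : ℝ)) * t := by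
        rw [hb]; push_cast [Finset.mul_sum]
        exact Finset.sum_congr rfl fun v _ => by ring
      rw [h1, avgS]
      calc ∑ v ∈ Bad, (∏ l, (p (v l) : ℝ)) * t
          ≤ ∑ v ∈ Bad, (∏ l, (p (v l) : ℝ)) * lipConst (seqComp f (List.ofFn v)) := by
            refine Finset.sum_le_sum fun v hv => ?_
            refine mul_le_mul_of_nonneg_left ?_
              (Finset.prod_nonneg fun _ _ => (p _).coe_nonneg)
            exact le_of_lt (Finset.mem_filter.1 hv).2
        _ ≤ ∑ v : Fin n → I, (∏ l, (p (v l) : ℝ)) * lipConst (seqComp f (List.ofFn v)) := by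
            refine Finset.sum_le_sum_of_subset_of_nonneg (Finset.subset_univ _)
              fun v _ _ => mul_nonneg (Finset.prod_nonneg fun _ _ => (p _).coe_nonneg)
                (lipConst_nonneg (seqComp_lipschitz hLip _))
    have hblt : (b : ℝ) < α2r := by
      have havgn := hN n hn
      nlinarith [hreal, havgn, htpos]
    rw [hcoe]
    have h1 : (b : ℝ≥0∞) = ENNReal.ofReal (b : ℝ) := (ENNReal.ofReal_coe_nnreal).symm
    have h2 : α / 2 = ENNReal.ofReal α2r := (ENNReal.ofReal_toReal hhalffin).symm
    rw [h1, h2]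
    exact (ENNReal.ofReal_lt_ofReal_iff hα2rpos).2 hblt
  have : α < α := by
    calc α ≤ _ + α / 2 := step1
      _ ≤ (∑ v ∈ Bad, ((∏ l, p (v l) : ℝ≥0) : ℝ≥0∞)) + α / 2 := add_le_add_left step2 _
      _ < α / 2 + α / 2 := ENNReal.add_lt_add_right hhalffin step3
      _ = α := ENNReal.add_halves α
  exact lt_irrefl _ this

end main

/-- If the `k`-th iterate of a probabilistic IFS of Lipschitz maps is average contractive,
then the support of the (unique) invariant probability measure of the Markov operator is the
semiattractor of the IFS. -/
theorem support_invariant_measure_eq_semiattractor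
    {X : Type*} [MetricSpace X] [CompleteSpace X] [TopologicalSpace.SeparableSpace X]
    [MeasurableSpace X] [BorelSpace X]
    {I : Type*} [Fintype I] [Nonempty I]
    (f : I → X → X) (hLip : ∀ i, ∃ K : ℝ≥0, LipschitzWith K (f i))
    (p : I → ℝ≥0) (hp : ∀ i, 0 < p i) (hsum : ∑ i, p i = 1)
    (k : ℕ) (hk : 1 ≤ k)
    (havg : ∑ v : Fin k → I,
      (∏ l, (p (v l) : ℝ)) * lipConst (seqComp f (List.ofFn v)) < 1)
    (μstar : Measure X) (hprob : IsProbabilityMeasure μstar)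
    (hinv : markov f p μstar = μstar) :
    msupport μstar = ⋂ x : X, Li (fun n => (hutch f)^[n] {x}) := by
  have hm : ∀ i, Continuous (f i) := fun i => (hLip i).choose_spec.continuous
  have havg' : avgS f p k < 1 := havg
  apply Subset.antisymm
  · intro x hx
    rw [mem_iInter]
    intro z
    have hne : ∀ n, ((hutch f)^[n] {z}).Nonempty := hutch_iter_nonempty z
    have hinfd : Tendsto (fun n => Metric.infDist x ((hutch f)^[n] {z})) atTop (𝓝 0) := by
      rw [Metric.tendsto_atTop]
      intro ε hε
      obtain ⟨N, hN⟩ := key_approx f hLip p hp hsum k hk havg' μstar hprob hinv hx z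
        (half_pos hε)
      refine ⟨N, fun n hn => ?_⟩
      obtain ⟨y, hyS, hyd⟩ := hN n hn
      have h1 : Metric.infDist x ((hutch f)^[n] {z}) ≤ dist x y :=
        Metric.infDist_le_dist_of_mem hyS
      rw [Real.dist_eq, sub_zero, abs_of_nonneg Metric.infDist_nonneg]
      calc Metric.infDist x ((hutch f)^[n] {z}) ≤ dist x y := h1
        _ = dist y x := dist_comm _ _
        _ < ε / 2 := hyd
        _ < ε := by linarith
    have hchoice : ∀ n : ℕ, ∃ y ∈ (hutch f)^[n] {z},
        dist x y < Metric.infDist x ((hutch f)^[n] {z}) + 1 / (n + 1) := by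
      intro n
      refine (Metric.infDist_lt_iff (hne n)).1 ?_
      have h0 : (0:ℝ) < 1/(n+1) := by positivity
      linarith
    choose u hu1 hu2 using hchoice
    refine ⟨u, hu1, ?_⟩
    rw [tendsto_iff_dist_tendsto_zero]
    have hrhs : Tendsto (fun n : ℕ =>
        Metric.infDist x ((hutch f)^[n] {z}) + 1 / (n + 1)) atTop (𝓝 0) := by
      have h := hinfd.add tendsto_one_div_add_atTop_nhds_zero_nat
      simpa using h
    refine squeeze_zero (fun n => dist_nonneg) (fun n => ?_) hrhs
    rw [dist_comm]
    exact (hu2 n).le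
  · intro y hy
    obtain ⟨x₀, hx₀⟩ := msupport_nonempty (μ := μstar)
    rw [mem_iInter] at hy
    obtain ⟨u, hu, hlim⟩ := hy x₀
    refine (msupport_closed (μ := μstar)).mem_of_tendsto hlim ?_
    exact Filter.Eventually.of_forall fun n => hutch_iter_subset hm hp hinv hx₀ n (hu n)
end
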